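/- The branch class on the infinite (k+1)-ary tree has k-monotone dimension 1: Let k ≥ 2 and let V be the set of all finite strings over {0,…,k} (the vertices of the infinite complete (k+1)-ary tree). For each infinite branch B ∈ {0,…,k}^ℕ define c_B : V → {0,…,k} by c_B(σ) = B_{|σ|} if σ = (B_0, B_1, …, B_{|σ|−1}) is a prefix of B, and c_B(σ) = 0 otherwise. Then there do not exist two distinct vertices σ_1, σ_2 ∈ V such that for every label y ∈ {0,…,k} there is a branch B with c_B(σ_1) = y and c_B(σ_2) = y. In other words, the class {c_B : B ∈ {0,…,k}^ℕ} does not contain all k+1 constant functions restricted to any pair of distinct vertices. -/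

import Mathlib

/-
A nonzero label `y` common to `σ₁` and `σ₂` forces both onto one branch, so they are
comparable, and `y` is the entry of the longer vertex just past the shorter one. Hence two
distinct vertices share at most one nonzero label, while `k ≥ 2` provides two.
-/

namespace Stmt15

/-- The concept associated to an infinite branch `B` of the infinite complete `(k+1)`-ary
tree: a vertex `σ` on the branch is labeled by the next branch direction `B_{|σ|}`, and
vertices off the branch are labeled `0`. -/
def cB {k : ℕ} (B : ℕ → Fin (k+1)) (σ : List (Fin (k+1))) : Fin (k+1) :=
  if σ = (List.range σ.length).map B then B σ.length else 0

variable {k : ℕ} {B : ℕ → Fin (k+1)} {σ σ₁ σ₂ : List (Fin (k+1))} {y : Fin (k+1)}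

lemma eq_map_range_of_cB_ne_zero (h : cB B σ ≠ 0) :
    σ = (List.range σ.length).map B ∧ cB B σ = B σ.length := by
  unfold cB at h ⊢
  split_ifs at h ⊢ with hσ
  · exact ⟨hσ, rfl⟩
  · exact absurd rfl h

lemma getElem_eq_of_cB_ne_zero (h : cB B σ ≠ 0) (i : ℕ) (hi : i < σ.length) :
    σ[i] = B i := by
  rw [List.getElem_of_eq (eq_map_range_of_cB_ne_zero h).1]
  simp

lemma getElem_length_eq_of_cB_eq (hy : y ≠ 0) (h₁ : cB B σ₁ = y) (h₂ : cB B σ₂ = y)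
    (hlt : σ₁.length < σ₂.length) : σ₂[σ₁.length] = y := by
  rw [getElem_eq_of_cB_ne_zero (h₂ ▸ hy), ← h₁, (eq_map_range_of_cB_ne_zero (h₁ ▸ hy)).2]

lemma length_ne_of_cB_eq (hne : σ₁ ≠ σ₂) (hy : y ≠ 0) (h₁ : cB B σ₁ = y)
    (h₂ : cB B σ₂ = y) : σ₁.length ≠ σ₂.length := by
  intro hlen
  have e₁ := (eq_map_range_of_cB_ne_zero (h₁ ▸ hy)).1
  have e₂ := (eq_map_range_of_cB_ne_zero (h₂ ▸ hy)).1
  exact hne (by rw [e₁, e₂, hlen])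

lemma eq_of_common_nonzero_labels {B' : ℕ → Fin (k+1)} {y' : Fin (k+1)} (hne : σ₁ ≠ σ₂)
    (hy : y ≠ 0) (hy' : y' ≠ 0) (h₁ : cB B σ₁ = y) (h₂ : cB B σ₂ = y)
    (h₁' : cB B' σ₁ = y') (h₂' : cB B' σ₂ = y') : y = y' := by
  rcases (length_ne_of_cB_eq hne hy h₁ h₂).lt_or_gt with hlt | hlt
  · rw [← getElem_length_eq_of_cB_eq hy h₁ h₂ hlt, getElem_length_eq_of_cB_eq hy' h₁' h₂' hlt]
  · rw [← getElem_length_eq_of_cB_eq hy h₂ h₁ hlt, getElem_length_eq_of_cB_eq hy' h₂' h₁' hlt]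

/-- The branch class on the infinite `(k+1)`-ary tree has `k`-monotone dimension 1: the class
`{c_B}` does not contain all `k+1` constant functions restricted to any pair of distinct
vertices. -/
theorem stmt15 (k : ℕ) (hk : 2 ≤ k) :
    ¬ ∃ σ₁ σ₂ : List (Fin (k+1)), σ₁ ≠ σ₂ ∧
      ∀ y : Fin (k+1), ∃ B : ℕ → Fin (k+1), cB B σ₁ = y ∧ cB B σ₂ = y := by
  rintro ⟨σ₁, σ₂, hne, h⟩
  obtain ⟨B₁, h₁, h₂⟩ := h ⟨1, by omega⟩
  obtain ⟨B₂, h₁', h₂'⟩ := h ⟨2, by omega⟩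
  have := eq_of_common_nonzero_labels hne (by simp [Fin.ext_iff]) (by simp [Fin.ext_iff])
    h₁ h₂ h₁' h₂'
  simp [Fin.ext_iff] at this

end Stmt15
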